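/- Let G be a finite abelian group of order g. The rank of the lattice adm(G) of admissible matrices equals (g−1)(g−2). -/

import Mathlib

/-- The elementary matrix with a single `1` in position `(x, y)`. -/
def Emat (K : Type) [DecidableEq K] (x y : K) : Matrix K K ℤ :=
  Matrix.single x y 1

/-- A `K × K` integer matrix is admissible for the finite abelian group `K` if every row sums
to zero, every column sums to zero, and for each `k ∈ K` the sum of the entries `M i j`
over pairs `(i, j)` with `i + j = k` is zero. -/
def Admissible (K : Type) [AddCommGroup K] [Fintype K] [DecidableEq K]
    (M : Matrix K K ℤ) : Prop :=
  (∀ i, ∑ j, M i j = 0) ∧ (∀ j, ∑ i, M i j = 0) ∧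
  (∀ k : K, (∑ p : K × K, if p.1 + p.2 = k then M p.1 p.2 else 0) = 0)

/-- The degree of an integer matrix: the sum of its positive entries. -/
def matDeg (K : Type) [Fintype K] (M : Matrix K K ℤ) : ℤ :=
  ∑ p : K × K, max (M p.1 p.2) 0

/-- `AdmBasis K r` says that the group of admissible matrices for `K` has a `ℤ`-basis of
cardinality `r`, i.e. it is free abelian of rank `r`. -/
def AdmBasis (K : Type) [AddCommGroup K] [Fintype K] [DecidableEq K] (r : ℕ) : Prop :=
  ∃ B : Fin r → Matrix K K ℤ,
    (∀ t, Admissible K (B t)) ∧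
    (∀ M : Matrix K K ℤ, Admissible K M → ∃! c : Fin r → ℤ, M = ∑ t, c t • B t)

section Aux

variable (G : Type) [AddCommGroup G] [Fintype G] [DecidableEq G]

/-- The linear map collecting row sums, column sums, and antidiagonal sums. -/
def admMap (R : Type) [CommRing R] : Matrix G G R →ₗ[R] ((G → R) × (G → R) × (G → R)) where
  toFun M := (fun i => ∑ j, M i j, fun j => ∑ i, M i j,
    fun k => ∑ p : G × G, if p.1 + p.2 = k then M p.1 p.2 else 0)
  map_add' M N := by
    refine Prod.ext ?_ (Prod.ext ?_ ?_) <;> funext x <;>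
      simp [Matrix.add_apply, Finset.sum_add_distrib, ite_add_zero]
  map_smul' c M := by
    refine Prod.ext ?_ (Prod.ext ?_ ?_) <;> funext x <;>
      simp [Matrix.smul_apply, Finset.mul_sum, smul_eq_mul, mul_ite, mul_zero]

theorem admissible_iff_mem_ker (M : Matrix G G ℤ) :
    Admissible G M ↔ M ∈ LinearMap.ker (admMap G ℤ) := by
  simp only [Admissible, LinearMap.mem_ker, admMap, LinearMap.coe_mk, AddHom.coe_mk,
    Prod.mk_eq_zero, funext_iff, Pi.zero_apply]

theorem admBasis_of_basis {n : ℕ} (b : Module.Basis (Fin n) ℤ (LinearMap.ker (admMap G ℤ))) :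
    AdmBasis G n := by
  refine ⟨fun t => (b t : Matrix G G ℤ), fun t => (admissible_iff_mem_ker G _).2 (b t).2, ?_⟩
  intro M hM
  have hM' : M ∈ LinearMap.ker (admMap G ℤ) := (admissible_iff_mem_ker G M).1 hM
  have coe_sum : ∀ c : Fin n → ℤ,
      ((∑ t, c t • b t : LinearMap.ker (admMap G ℤ)) : Matrix G G ℤ)
        = ∑ t, c t • (b t : Matrix G G ℤ) := by
    intro c
    simp
  refine ⟨fun t => b.repr ⟨M, hM'⟩ t, ?_, ?_⟩
  · have h1 : (⟨M, hM'⟩ : LinearMap.ker (admMap G ℤ)) = ∑ t, b.repr ⟨M, hM'⟩ t • b t :=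
      (b.sum_repr ⟨M, hM'⟩).symm
    have := congrArg (Subtype.val) h1
    exact this.trans (coe_sum _)
  · intro c hc
    have h2 : (⟨M, hM'⟩ : LinearMap.ker (admMap G ℤ)) = ∑ t, c t • b t := by
      apply Subtype.ext
      simpa [coe_sum] using hc
    funext t
    have h3 := congrArg (fun z => b.repr z t) h2
    exact (by simpa [Finsupp.single_apply, Finset.sum_ite_eq'] using h3 : _ = c t).symm

/-- entrywise cast of integer matrices to rational matrices, as a `ℤ`-linear map -/
def castHom : Matrix G G ℤ →ₗ[ℤ] Matrix G G ℚ where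
  toFun M := M.map (Int.cast : ℤ → ℚ)
  map_add' M N := by ext i j; simp [Matrix.map_apply]
  map_smul' c M := by
    refine Matrix.ext fun i j => ?_
    show ((c • M) i j : ℚ) = c • ((M i j : ℚ))
    rw [Matrix.smul_apply, zsmul_eq_mul, zsmul_eq_mul]
    push_cast; ring

theorem castHom_injective : Function.Injective (castHom G) := by
  intro M N h
  ext i j
  have := congrFun (congrFun (congrArg Matrix.of.symm h) i) j
  simpa [castHom, Matrix.map_apply] using this

theorem mem_ker_map_iff (M : Matrix G G ℤ) :
    castHom G M ∈ LinearMap.ker (admMap G ℚ) ↔ M ∈ LinearMap.ker (admMap G ℤ) := by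
  have key1 : ∀ f : G → ℤ, ((∑ j, (f j : ℚ)) = 0 ↔ ∑ j, f j = 0) := by
    intro f
    rw [show (∑ j, (f j : ℚ)) = ((∑ j, f j : ℤ) : ℚ) by push_cast; rfl, Int.cast_eq_zero]
  have key3 : ∀ (f : G × G → ℤ) (k : G),
      ((∑ p : G × G, if p.1 + p.2 = k then (f p : ℚ) else 0) = 0
        ↔ (∑ p : G × G, if p.1 + p.2 = k then f p else 0) = 0) := by
    intro f k
    rw [show (∑ p : G × G, if p.1 + p.2 = k then (f p : ℚ) else 0)
        = ((∑ p : G × G, if p.1 + p.2 = k then f p else 0 : ℤ) : ℚ) by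
      rw [Int.cast_sum]; exact Finset.sum_congr rfl fun p _ => by split <;> simp,
      Int.cast_eq_zero]
  simp only [LinearMap.mem_ker, admMap, castHom, LinearMap.coe_mk, AddHom.coe_mk,
    Prod.mk_eq_zero, funext_iff, Pi.zero_apply, Matrix.map_apply, key1, key3]

/-- explicit preimage of a compatible triple under `admMap` -/
def preim (u v w : G → ℚ) : Matrix G G ℚ := Matrix.of fun r c =>
  (if c = 0 then w r - v r else 0) + (if r = 0 then v c else 0) +
    ((Fintype.card G : ℚ))⁻¹ * (u r + v r - (if r = 0 then ∑ i, u i else 0) - w r)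

theorem admMap_preim (u v w : G → ℚ) (hv : ∑ j, v j = ∑ i, u i) (hw : ∑ k, w k = ∑ i, u i) :
    admMap G ℚ (preim G u v w) = (u, v, w) := by
  have hg : (Fintype.card G : ℚ) ≠ 0 := by exact_mod_cast Fintype.card_ne_zero
  refine Prod.ext ?_ (Prod.ext ?_ ?_)
  · funext r
    show (∑ c, preim G u v w r c) = u r
    simp only [preim, Matrix.of_apply]
    rw [Finset.sum_add_distrib, Finset.sum_add_distrib, Finset.sum_ite_eq' Finset.univ (0 : G),
      Finset.sum_const, Finset.card_univ, nsmul_eq_mul]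
    by_cases hr : r = 0
    · simp only [hr, if_true, Finset.mem_univ, eq_self_iff_true]
      rw [hv]
      field_simp
      ring
    · simp only [hr, if_false, Finset.sum_const_zero, add_zero, Finset.mem_univ, if_true]
      field_simp
      ring
  · funext c
    show (∑ r, preim G u v w r c) = v c
    simp only [preim, Matrix.of_apply]
    rw [Finset.sum_add_distrib, Finset.sum_add_distrib, Finset.sum_ite_eq' Finset.univ (0 : G),
      ← Finset.mul_sum]
    have h1 : ∑ r, (u r + v r - (if r = 0 then ∑ i, u i else 0) - w r) = 0 := by
      rw [Finset.sum_sub_distrib, Finset.sum_sub_distrib, Finset.sum_add_distrib,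
        Finset.sum_ite_eq' Finset.univ (0 : G), hv, hw]
      simp
    have h2 : ∑ r, (w r - v r) = 0 := by
      rw [Finset.sum_sub_distrib, hv, hw, sub_self]
    rw [h1, mul_zero]
    by_cases hc : c = 0 <;> simp [hc, h2]
  · funext k
    show (∑ p : G × G, if p.1 + p.2 = k then preim G u v w p.1 p.2 else 0) = w k
    have anti : ∀ (f : G → G → ℚ),
        (∑ p : G × G, if p.1 + p.2 = k then f p.1 p.2 else 0) = ∑ r, f r (k - r) := by
      intro f
      rw [Fintype.sum_prod_type]
      refine Finset.sum_congr rfl fun r _ => ?_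
      rw [show (∑ c, if r + c = k then f r c else 0) = ∑ c, if c = k - r then f r c else 0 from
        Finset.sum_congr rfl fun c _ => if_congr (by rw [eq_sub_iff_add_eq, add_comm]) rfl rfl,
        Finset.sum_ite_eq' Finset.univ (k - r)]
      simp
    rw [anti (preim G u v w)]
    simp only [preim, Matrix.of_apply]
    rw [Finset.sum_add_distrib, Finset.sum_add_distrib, ← Finset.mul_sum]
    have h1 : ∑ r, (u r + v r - (if r = 0 then ∑ i, u i else 0) - w r) = 0 := by
      rw [Finset.sum_sub_distrib, Finset.sum_sub_distrib, Finset.sum_add_distrib,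
        Finset.sum_ite_eq' Finset.univ (0 : G), hv, hw]
      simp
    have h2 : (∑ r, if k - r = 0 then w r - v r else 0) = w k - v k := by
      rw [show (∑ r, if k - r = 0 then w r - v r else 0)
          = ∑ r, if r = k then w r - v r else 0 from
        Finset.sum_congr rfl fun r _ => if_congr (by rw [sub_eq_zero, eq_comm]) rfl rfl,
        Finset.sum_ite_eq' Finset.univ k]
      simp
    have h3 : (∑ r, if r = 0 then v (k - r) else 0) = v k := by
      rw [Finset.sum_ite_eq' Finset.univ (0 : G)]
      simp
    rw [h1, h2, h3, mul_zero]
    ring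

/-- the compatibility map whose kernel is the range of `admMap` -/
def psiMap : ((G → ℚ) × (G → ℚ) × (G → ℚ)) →ₗ[ℚ] ℚ × ℚ where
  toFun x := (∑ i, x.1 i - ∑ k, x.2.2 k, ∑ j, x.2.1 j - ∑ k, x.2.2 k)
  map_add' x y := by
    simp [Finset.sum_add_distrib, Prod.ext_iff]
    constructor <;> ring
  map_smul' c x := by
    simp only [Prod.smul_fst, Prod.smul_snd, Pi.smul_apply, smul_eq_mul, RingHom.id_apply,
      Prod.ext_iff, ← Finset.mul_sum]
    constructor <;> ring

theorem range_admMap : LinearMap.range (admMap G ℚ) = LinearMap.ker (psiMap G) := by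
  apply le_antisymm
  · rintro x ⟨M, rfl⟩
    have hA : ∑ k, ∑ p : G × G, (if p.1 + p.2 = k then M p.1 p.2 else 0)
        = ∑ p : G × G, M p.1 p.2 := by
      rw [Finset.sum_comm]
      refine Finset.sum_congr rfl fun p _ => ?_
      rw [Finset.sum_ite_eq Finset.univ (p.1 + p.2)]
      simp
    have hR : ∑ i, ∑ j, M i j = ∑ p : G × G, M p.1 p.2 := by
      rw [Fintype.sum_prod_type]
    have hC : ∑ j, ∑ i, M i j = ∑ p : G × G, M p.1 p.2 := by
      rw [Fintype.sum_prod_type, Finset.sum_comm]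
    simp only [LinearMap.mem_ker, psiMap, admMap, LinearMap.coe_mk, AddHom.coe_mk,
      Prod.mk_eq_zero]
    exact ⟨by rw [hR, hA, sub_self], by rw [hC, hA, sub_self]⟩
  · rintro ⟨u, v, w⟩ hx
    simp only [LinearMap.mem_ker, psiMap, LinearMap.coe_mk, AddHom.coe_mk,
      Prod.mk_eq_zero, sub_eq_zero] at hx
    exact ⟨preim G u v w, admMap_preim G u v w (hx.2.trans hx.1.symm) hx.1.symm⟩

theorem finrank_ker_admMap :
    Module.finrank ℚ (LinearMap.ker (admMap G ℚ)) + 3 * Fintype.card G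
      = Fintype.card G * Fintype.card G + 2 := by
  have h1 := LinearMap.finrank_range_add_finrank_ker (admMap G ℚ)
  have h2 := LinearMap.finrank_range_add_finrank_ker (psiMap G)
  have hm : Module.finrank ℚ (Matrix G G ℚ) = Fintype.card G * Fintype.card G := by
    rw [Module.finrank_matrix, Module.finrank_self, mul_one]
  have hd : Module.finrank ℚ ((G → ℚ) × (G → ℚ) × (G → ℚ)) = 3 * Fintype.card G := by
    rw [Module.finrank_prod, Module.finrank_prod, Module.finrank_pi]
    ring
  have hr : LinearMap.range (psiMap G) = ⊤ := by
    rw [LinearMap.range_eq_top]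
    rintro ⟨a, b⟩
    refine ⟨(Pi.single 0 a, Pi.single 0 b, 0), ?_⟩
    simp [psiMap, Finset.sum_pi_single']
  rw [hr, finrank_top, hd] at h2
  have h2' : Module.finrank ℚ (ℚ × ℚ) = 2 := by
    rw [Module.finrank_prod, Module.finrank_self]
  rw [h2'] at h2
  rw [hm, range_admMap] at h1
  omega

end Aux

/-- For any finite abelian group `G` of order `g`, the lattice of admissible matrices is
free abelian of rank `(g−1)(g−2)`. -/
theorem adm_rank (G : Type) [AddCommGroup G] [Fintype G] [DecidableEq G] :
    AdmBasis G ((Fintype.card G - 1) * (Fintype.card G - 2)) := by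
  obtain ⟨n, b⟩ := Submodule.basisOfPid (Matrix.stdBasis ℤ G G) (LinearMap.ker (admMap G ℤ))
  have key : AdmBasis G n := admBasis_of_basis G b
  set vQ : Fin n → Matrix G G ℚ := fun t => castHom G (b t : Matrix G G ℤ) with hvQ
  have li1 : LinearIndependent ℤ (fun t => ((b t : Matrix G G ℤ))) := by
    have := b.linearIndependent.map' (LinearMap.ker (admMap G ℤ)).subtype
      (Submodule.ker_subtype _)
    exact this
  have li2 : LinearIndependent ℤ vQ := by
    have := li1.map' (castHom G) (LinearMap.ker_eq_bot.2 (castHom_injective G))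
    exact this
  have li3 : LinearIndependent ℚ vQ := (LinearIndependent.iff_fractionRing ℤ ℚ).1 li2
  have hspan : Submodule.span ℚ (Set.range vQ) = LinearMap.ker (admMap G ℚ) := by
    apply le_antisymm
    · rw [Submodule.span_le]
      rintro _ ⟨t, rfl⟩
      exact (mem_ker_map_iff G _).2 (b t).2
    · intro x hx
      obtain ⟨d, hd⟩ := IsLocalization.exist_integer_multiples_of_finite
        (nonZeroDivisors ℤ) (fun p : G × G => x p.1 p.2)
      choose y hy using hd
      set Y : Matrix G G ℤ := Matrix.of fun i j => y (i, j) with hY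
      have hYx : castHom G Y = ((d : ℤ) : ℚ) • x := by
        refine Matrix.ext fun i j => ?_
        have h := hy (i, j)
        show ((Y i j : ℚ)) = (((d : ℤ) : ℚ) • x) i j
        rw [Matrix.smul_apply]
        simpa [hY, Algebra.smul_def, zsmul_eq_mul] using h
      have hxker : ((d : ℤ) : ℚ) • x ∈ LinearMap.ker (admMap G ℚ) :=
        Submodule.smul_mem _ _ hx
      have hYker : Y ∈ LinearMap.ker (admMap G ℤ) := (mem_ker_map_iff G Y).1 (hYx ▸ hxker)
      have hrepr : Y = ∑ t, b.repr ⟨Y, hYker⟩ t • ((b t : Matrix G G ℤ)) := by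
        have h1 := (b.sum_repr ⟨Y, hYker⟩).symm
        have h2 := congrArg Subtype.val h1
        have h3 : ((∑ t, b.repr ⟨Y, hYker⟩ t • b t : LinearMap.ker (admMap G ℤ)) : Matrix G G ℤ)
            = ∑ t, b.repr ⟨Y, hYker⟩ t • (b t : Matrix G G ℤ) := by
          simp only [Submodule.coe_sum, Submodule.coe_smul]
        exact h2.trans h3
      have hcast : castHom G Y = ∑ t, (b.repr ⟨Y, hYker⟩ t) • vQ t := by
        conv_lhs => rw [hrepr]
        rw [map_sum]
        exact Finset.sum_congr rfl fun t _ => map_smul (castHom G) _ _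
      have hmem : ((d : ℤ) : ℚ) • x ∈ Submodule.span ℚ (Set.range vQ) := by
        rw [← hYx, hcast]
        exact Submodule.sum_mem _ fun t _ =>
          Submodule.smul_of_tower_mem _ _ (Submodule.subset_span ⟨t, rfl⟩)
      have hd0 : ((d : ℤ) : ℚ) ≠ 0 := by
        exact_mod_cast nonZeroDivisors.coe_ne_zero d
      have hx' : x = (((d : ℤ) : ℚ))⁻¹ • (((d : ℤ) : ℚ) • x) := by
        rw [smul_smul, inv_mul_cancel₀ hd0, one_smul]
      rw [hx']
      exact Submodule.smul_mem _ _ hmem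
  have hn : n = Module.finrank ℚ (LinearMap.ker (admMap G ℚ)) := by
    rw [← hspan, finrank_span_eq_card li3, Fintype.card_fin]
  have heq := finrank_ker_admMap G
  rw [← hn] at heq
  have hfin : (Fintype.card G - 1) * (Fintype.card G - 2) = n := by
    have hg : 1 ≤ Fintype.card G := Fintype.card_pos
    rcases Nat.lt_or_ge (Fintype.card G) 2 with h | h
    · have h1 : Fintype.card G = 1 := by omega
      rw [h1] at heq ⊢
      norm_num at heq ⊢
      omega
    · obtain ⟨m, hm⟩ : ∃ m, Fintype.card G = m + 2 := ⟨Fintype.card G - 2, by omega⟩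
      rw [hm] at heq ⊢
      rw [show m + 2 - 1 = m + 1 from by omega, show m + 2 - 2 = m from by omega]
      zify at heq ⊢
      linear_combination (-1 : ℤ) * heq
  exact hfin ▸ key
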